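/- For every n ≥ 2 and every subset A of L, the following are equivalent: (i) (X, τ(A)) is hereditarily Lindelöf; (ii) the set L \ A is countable; (iii) (X, τ(A)) is second-countable; (iv) (X, τ(A)) is metrizable. -/
import Mathlib


open Metric Set TopologicalSpace
open Topology

noncomputable section

/-- The last coordinate `x (n-1)` of a point of `EuclideanSpace ℝ (Fin n)`
(junk value `0` if `n = 0`). -/
def lastCoord (n : ℕ) (x : EuclideanSpace ℝ (Fin n)) : ℝ :=
  if h : 0 < n then x ⟨n - 1, Nat.sub_lt h one_pos⟩ else 0

/-- The closed upper half-space `X = {x : x (n-1) ≥ 0}`. -/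
def HalfSpace (n : ℕ) : Set (EuclideanSpace ℝ (Fin n)) := {x | 0 ≤ lastCoord n x}

/-- The open upper half-space `P = {x : x (n-1) > 0}`. -/
def OpenHalf (n : ℕ) : Set (EuclideanSpace ℝ (Fin n)) := {x | 0 < lastCoord n x}

/-- The boundary hyperplane `L = {x : x (n-1) = 0}`. -/
def Bdry (n : ℕ) : Set (EuclideanSpace ℝ (Fin n)) := {x | lastCoord n x = 0}

/-- The `n`-th standard basis vector `e` (junk value `0` if `n = 0`). -/
def eVec (n : ℕ) : EuclideanSpace ℝ (Fin n) :=
  if h : 0 < n then EuclideanSpace.single ⟨n - 1, Nat.sub_lt h one_pos⟩ (1 : ℝ) else 0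

/-- The tangent ball `B̃(a, ε) = {a} ∪ B(a + ε • e, ε)`. -/
def tangentBall (n : ℕ) (a : EuclideanSpace ℝ (Fin n)) (ε : ℝ) :
    Set (EuclideanSpace ℝ (Fin n)) :=
  {a} ∪ ball (a + ε • eVec n) ε

/-- The generating family for the topology `τ(A)` on `X`:
balls `B(a,ε)` with `a ∈ P`, `0 < ε < a (n-1)`; traces `B(a,ε) ∩ X` with `a ∈ A`, `ε > 0`;
and tangent balls `B̃(a,ε)` with `a ∈ L \ A`, `ε > 0`. -/
def niemGen (n : ℕ) (A : Set (EuclideanSpace ℝ (Fin n))) : Set (Set (HalfSpace n)) :=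
  {s | ∃ a ∈ OpenHalf n, ∃ ε, 0 < ε ∧ ε < lastCoord n a ∧
      s = Subtype.val ⁻¹' ball a ε} ∪
  {s | ∃ a ∈ A, ∃ ε, 0 < ε ∧ s = Subtype.val ⁻¹' ball a ε} ∪
  {s | ∃ a ∈ Bdry n \ A, ∃ ε, 0 < ε ∧ s = Subtype.val ⁻¹' tangentBall n a ε}

/-- The topology `τ(A)` on `X`; `τ(∅)` is the Niemytzki topology `τ_N`. -/
def tau (n : ℕ) (A : Set (EuclideanSpace ℝ (Fin n))) : TopologicalSpace (HalfSpace n) :=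
  generateFrom (niemGen n A)

/-- The inclusion of `L` into `X`. -/
def inclLX (n : ℕ) (x : Bdry n) : HalfSpace n := ⟨x.1, le_of_eq x.2.symm⟩

/-- The subspace topology `τ(A)|_L` on `L` induced from `(X, τ(A))`. -/
def tauL (n : ℕ) (A : Set (EuclideanSpace ℝ (Fin n))) : TopologicalSpace (Bdry n) :=
  TopologicalSpace.induced (inclLX n) (tau n A)

/-- A space is perfect if every closed set is a `Gδ`-set. -/
def IsPerfectSpace (X : Type*) [TopologicalSpace X] : Prop :=
  ∀ s : Set X, IsClosed s → IsGδ s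

/-- An `Fσ`-set: a countable union of closed sets. -/
def IsFsigma {X : Type*} [TopologicalSpace X] (s : Set X) : Prop :=
  ∃ F : ℕ → Set X, (∀ i, IsClosed (F i)) ∧ s = ⋃ i, F i

/-- Countably paracompact: every countable open cover admits a locally finite open refinement. -/
def CountablyParacompact (X : Type*) [TopologicalSpace X] : Prop :=
  ∀ u : ℕ → Set X, (∀ i, IsOpen (u i)) → (⋃ i, u i) = Set.univ →
    ∃ (ι : Type) (v : ι → Set X), (∀ j, IsOpen (v j)) ∧ (⋃ j, v j) = Set.univ ∧
      LocallyFinite v ∧ ∀ j, ∃ i, v j ⊆ u i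

/-- A zero set: the zero locus of a continuous real-valued function. -/
def IsZeroSet {X : Type*} [TopologicalSpace X] (s : Set X) : Prop :=
  ∃ f : X → ℝ, Continuous f ∧ s = f ⁻¹' {0}

/-- `Y` is z-embedded in `X` if every zero set of the subspace `Y`
is the trace on `Y` of a zero set of `X`. -/
def ZEmbedded {X : Type*} [TopologicalSpace X] (Y : Set X) : Prop :=
  ∀ s : Set Y, IsZeroSet s → ∃ Z : Set X, IsZeroSet Z ∧ s = Subtype.val ⁻¹' Z

/-- `Y` is `C*`-embedded in `X` if every bounded continuous real-valued function on the
subspace `Y` extends to a bounded continuous function on `X`. -/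
def CStarEmbedded {X : Type*} [TopologicalSpace X] (Y : Set X) : Prop :=
  ∀ f : Y → ℝ, Continuous f → (∃ M, ∀ y, |f y| ≤ M) →
    ∃ g : X → ℝ, Continuous g ∧ (∃ M, ∀ x, |g x| ≤ M) ∧ ∀ y : Y, g ↑y = f y
end


noncomputable section

variable {n : ℕ}

open scoped RealInnerProductSpace

lemma lastCoord_inner (hn : 0 < n) (x : EuclideanSpace ℝ (Fin n)) :
    lastCoord n x = ⟪eVec n, x⟫ := by
  rw [lastCoord, eVec, dif_pos hn, dif_pos hn, EuclideanSpace.inner_single_left]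
  simp

lemma norm_eVec (hn : 0 < n) : ‖eVec n‖ = 1 := by
  rw [eVec, dif_pos hn, EuclideanSpace.norm_single]; norm_num

lemma abs_lastCoord_sub (hn : 0 < n) (x y : EuclideanSpace ℝ (Fin n)) :
    |lastCoord n x - lastCoord n y| ≤ dist x y := by
  rw [lastCoord_inner hn, lastCoord_inner hn, ← inner_sub_right, dist_eq_norm]
  calc |⟪eVec n, x - y⟫| ≤ ‖eVec n‖ * ‖x - y‖ := abs_real_inner_le_norm _ _
    _ = ‖x - y‖ := by rw [norm_eVec hn, one_mul]

lemma lastCoord_add_smul (hn : 0 < n) (a : EuclideanSpace ℝ (Fin n)) (ε : ℝ) :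
    lastCoord n (a + ε • eVec n) = lastCoord n a + ε := by
  rw [lastCoord_inner hn, lastCoord_inner hn, inner_add_right, real_inner_smul_right,
    real_inner_self_eq_norm_sq, norm_eVec hn]
  ring

lemma lastCoord_gt_of_mem_ball (hn : 0 < n) {c y : EuclideanSpace ℝ (Fin n)} {r : ℝ}
    (hy : y ∈ ball c r) : lastCoord n c - r < lastCoord n y := by
  have h := abs_lastCoord_sub hn c y
  rw [mem_ball, dist_comm] at hy
  have := abs_le.1 h
  linarith [this.1, this.2]

lemma ball_subset_openHalf (hn : 0 < n) {a : EuclideanSpace ℝ (Fin n)} {r : ℝ}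
    (hr : r ≤ lastCoord n a) : ball a r ⊆ OpenHalf n := fun y hy => by
  have := lastCoord_gt_of_mem_ball hn hy
  simp only [OpenHalf, mem_setOf_eq]; linarith

lemma tangent_open_subset_openHalf (hn : 0 < n) {a : EuclideanSpace ℝ (Fin n)} {r : ℝ}
    (ha : lastCoord n a = 0) : ball (a + r • eVec n) r ⊆ OpenHalf n := by
  apply ball_subset_openHalf hn
  rw [lastCoord_add_smul hn, ha, zero_add]

lemma dist_add_smul (hn : 0 < n) (a : EuclideanSpace ℝ (Fin n)) (δ ε : ℝ) :
    dist (a + δ • eVec n) (a + ε • eVec n) = |δ - ε| := by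
  rw [dist_eq_norm]
  have : a + δ • eVec n - (a + ε • eVec n) = (δ - ε) • eVec n := by module
  rw [this, norm_smul, norm_eVec hn, mul_one, Real.norm_eq_abs]

lemma tangentBall_subset_ball (hn : 0 < n) {a : EuclideanSpace ℝ (Fin n)} {r s : ℝ}
    (hr : 0 < r) (hs : 2 * r ≤ s) : tangentBall n a r ⊆ ball a s := by
  rintro y (rfl | hy)
  · exact mem_ball_self (by linarith)
  · rw [mem_ball] at hy ⊢
    have h2 : dist (a + r • eVec n) a = |r - 0| := by
      simpa using dist_add_smul hn a r 0
    have h3 := dist_triangle y (a + r • eVec n) a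
    rw [abs_of_pos (by linarith : (0:ℝ) < r - 0)] at h2
    linarith

lemma tangentBall_mono (hn : 0 < n) {a : EuclideanSpace ℝ (Fin n)} {δ ε : ℝ}
    (hδ : 0 < δ) (h : δ ≤ ε) : tangentBall n a δ ⊆ tangentBall n a ε := by
  rintro y (rfl | hy)
  · exact Or.inl rfl
  · right
    rw [mem_ball] at hy ⊢
    have := dist_add_smul hn a δ ε
    have h3 := dist_triangle y (a + δ • eVec n) (a + ε • eVec n)
    rw [abs_of_nonpos (by linarith)] at this
    linarith

lemma eq_of_mem_tangentBall_bdry (hn : 0 < n) {a y : EuclideanSpace ℝ (Fin n)} {r : ℝ}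
    (ha : lastCoord n a = 0) (hy : y ∈ tangentBall n a r) (h0 : lastCoord n y = 0) : y = a := by
  rcases hy with rfl | hy
  · rfl
  · exact absurd (tangent_open_subset_openHalf hn ha hy) (by simp [OpenHalf, h0])

lemma mem_ball_of_mem_closedBall_tangent (hn : 0 < n) {a y : EuclideanSpace ℝ (Fin n)} {δ ε : ℝ}
    (hδ : 0 < δ) (hδε : δ < ε) (hy : y ∈ closedBall (a + δ • eVec n) δ) (hya : y ≠ a) :
    y ∈ ball (a + ε • eVec n) ε := by
  set v := y - a with hv
  have hc : ∀ r : ℝ, dist y (a + r • eVec n) = ‖v - r • eVec n‖ := by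
    intro r; rw [dist_eq_norm]; congr 1; rw [hv]; module
  have he : ‖eVec n‖ = 1 := norm_eVec hn
  have hvne : v ≠ 0 := sub_ne_zero.2 hya
  have hsq : ∀ r : ℝ, ‖v - r • eVec n‖ ^ 2 = ‖v‖ ^ 2 - 2 * r * ⟪v, eVec n⟫ + r ^ 2 := by
    intro r
    rw [norm_sub_sq_real, real_inner_smul_right, norm_smul, Real.norm_eq_abs, he, mul_one,
      sq_abs]
    ring
  have h1 : ‖v - δ • eVec n‖ ≤ δ := by rw [← hc]; exact mem_closedBall.1 hy
  have h1' : ‖v‖ ^ 2 ≤ 2 * δ * ⟪v, eVec n⟫ := by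
    have := hsq δ
    nlinarith [norm_nonneg (v - δ • eVec n)]
  have hvpos : 0 < ‖v‖ ^ 2 := pow_pos (norm_pos_iff.2 hvne) 2
  have hcpos : 0 < ⟪v, eVec n⟫ := by nlinarith
  have h2 : ‖v - ε • eVec n‖ ^ 2 < ε ^ 2 := by
    rw [hsq]
    nlinarith
  rw [mem_ball, hc]
  nlinarith [norm_nonneg (v - ε • eVec n), lt_of_lt_of_le hδ hδε.le]

lemma isOpen_gen {α : Type*} {g : Set (Set α)} {s : Set α}
    (h : ∀ x ∈ s, ∃ t ∈ g, x ∈ t ∧ t ⊆ s) : IsOpen[generateFrom g] s := by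
  letI := generateFrom g
  have : s = ⋃₀ {t | t ∈ g ∧ t ⊆ s} := by
    apply Subset.antisymm
    · intro x hx
      obtain ⟨t, ht, hxt, hts⟩ := h x hx
      exact ⟨t, ⟨ht, hts⟩, hxt⟩
    · rintro x ⟨t, ⟨_, hts⟩, hxt⟩
      exact hts hxt
  rw [this]
  exact isOpen_sUnion fun t ht => isOpen_generateFrom_of_mem ht.1

lemma isOpen_euclid (hn : 0 < n) (A : Set (EuclideanSpace ℝ (Fin n)))
    {U : Set (EuclideanSpace ℝ (Fin n))} (hU : IsOpen U) :
    IsOpen[tau n A] (Subtype.val ⁻¹' U : Set (HalfSpace n)) := by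
  apply isOpen_gen
  intro x hx
  obtain ⟨r, hr, hball⟩ := Metric.isOpen_iff.1 hU x.1 hx
  rcases lt_or_eq_of_le (show (0:ℝ) ≤ lastCoord n x.1 from x.2) with h0 | h0
  · have hmin : 0 < min (lastCoord n x.1) r / 2 := by positivity
    refine ⟨Subtype.val ⁻¹' ball x.1 (min (lastCoord n x.1) r / 2),
      Or.inl (Or.inl ⟨x.1, h0, _, hmin, ?_, rfl⟩), mem_ball_self hmin, ?_⟩
    · have := min_le_left (lastCoord n x.1) r
      linarith
    · refine preimage_mono ((ball_subset_ball ?_).trans hball)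
      have := min_le_right (lastCoord n x.1) r
      linarith
  · by_cases hxA : x.1 ∈ A
    · exact ⟨Subtype.val ⁻¹' ball x.1 r, Or.inl (Or.inr ⟨x.1, hxA, r, hr, rfl⟩),
        mem_ball_self hr, preimage_mono hball⟩
    · refine ⟨Subtype.val ⁻¹' tangentBall n x.1 (r/2),
        Or.inr ⟨x.1, ⟨h0.symm, hxA⟩, r/2, by linarith, rfl⟩, Or.inl rfl,
        preimage_mono ((tangentBall_subset_ball hn (by linarith) (by linarith)).trans hball)⟩

def niemBas (n : ℕ) (A D : Set (EuclideanSpace ℝ (Fin n))) : Set (Set (HalfSpace n)) :=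
  {s | ∃ q ∈ D, ∃ r : ℚ, 0 < (r : ℝ) ∧ s = Subtype.val ⁻¹' ball q (r : ℝ)} ∪
  {s | ∃ a ∈ Bdry n \ A, ∃ r : ℚ, 0 < (r : ℝ) ∧ s = Subtype.val ⁻¹' tangentBall n a (r : ℝ)}

lemma niemBas_isOpen (hn : 0 < n) (A : Set (EuclideanSpace ℝ (Fin n)))
    {D : Set (EuclideanSpace ℝ (Fin n))} :
    ∀ s ∈ niemBas n A D, IsOpen[tau n A] s := by
  rintro s (⟨q, _, r, hr, rfl⟩ | ⟨a, ha, r, hr, rfl⟩)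
  · exact isOpen_euclid hn A isOpen_ball
  · exact isOpen_generateFrom_of_mem (Or.inr ⟨a, ha, r, hr, rfl⟩)

lemma exists_niemBas_ball (A : Set (EuclideanSpace ℝ (Fin n)))
    {D : Set (EuclideanSpace ℝ (Fin n))} (hD : Dense D) (x : HalfSpace n) {ρ : ℝ} (hρ : 0 < ρ) :
    ∃ t ∈ niemBas n A D, x ∈ t ∧ t ⊆ Subtype.val ⁻¹' ball x.1 ρ := by
  obtain ⟨q, hq, hdist⟩ := hD.exists_dist_lt x.1 (by linarith : (0:ℝ) < ρ/4)
  obtain ⟨r, hr1, hr2⟩ := exists_rat_btwn (show dist x.1 q < ρ/2 by linarith)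
  refine ⟨_, Or.inl ⟨q, hq, r, lt_of_le_of_lt dist_nonneg hr1, rfl⟩, hr1, preimage_mono ?_⟩
  apply ball_subset_ball'
  have : dist q x.1 = dist x.1 q := dist_comm q x.1
  linarith

lemma exists_niemBas_tangent (hn : 0 < n) {A D : Set (EuclideanSpace ℝ (Fin n))}
    {x : HalfSpace n} (hx : x.1 ∈ Bdry n \ A) {ρ : ℝ} (hρ : 0 < ρ) :
    ∃ t ∈ niemBas n A D, x ∈ t ∧ t ⊆ Subtype.val ⁻¹' tangentBall n x.1 ρ := by
  obtain ⟨r, hr1, hr2⟩ := exists_rat_btwn hρ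
  have hr1' : (0:ℝ) < r := by exact_mod_cast hr1
  exact ⟨_, Or.inr ⟨x.1, hx, r, hr1', rfl⟩, Or.inl rfl,
    preimage_mono (tangentBall_mono hn hr1' hr2.le)⟩

lemma exists_ball_subset_of_mem_niemBas (hn : 0 < n) {A D : Set (EuclideanSpace ℝ (Fin n))}
    {t : Set (HalfSpace n)} (ht : t ∈ niemBas n A D) {x : HalfSpace n} (hx : x ∈ t)
    (hside : 0 < lastCoord n x.1 ∨ x.1 ∈ A) :
    ∃ ρ, 0 < ρ ∧ Subtype.val ⁻¹' ball x.1 ρ ⊆ t := by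
  rcases ht with ⟨q, _, r, hr, rfl⟩ | ⟨a, ha, r, hr, rfl⟩
  · have hd : dist x.1 q < r := hx
    refine ⟨r - dist x.1 q, by linarith, preimage_mono (ball_subset_ball' ?_)⟩
    linarith
  · rcases hx with h | h
    · exfalso
      have hxa : x.1 = a := h
      rcases hside with h1 | h1
      · rw [hxa, ha.1] at h1; exact lt_irrefl 0 h1
      · rw [hxa] at h1; exact ha.2 h1
    · have hd : dist x.1 (a + (r:ℝ) • eVec n) < r := h
      refine ⟨r - dist x.1 (a + (r:ℝ) • eVec n), by linarith,
        preimage_mono ((ball_subset_ball' ?_).trans subset_union_right)⟩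
      linarith

lemma exists_tangent_subset_of_mem_niemBas (hn : 0 < n) {A D : Set (EuclideanSpace ℝ (Fin n))}
    {t : Set (HalfSpace n)} (ht : t ∈ niemBas n A D) {x : HalfSpace n} (hx : x ∈ t)
    (h0 : lastCoord n x.1 = 0) (hxA : x.1 ∉ A) :
    ∃ ρ, 0 < ρ ∧ Subtype.val ⁻¹' tangentBall n x.1 ρ ⊆ t := by
  rcases ht with ⟨q, _, r, hr, rfl⟩ | ⟨a, ha, r, hr, rfl⟩
  · have hd : dist x.1 q < r := hx
    refine ⟨(r - dist x.1 q)/2, by linarith, preimage_mono ?_⟩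
    refine (tangentBall_subset_ball hn (s := (r:ℝ) - dist x.1 q) (by linarith)
      (by linarith)).trans (ball_subset_ball' ?_)
    linarith
  · have hxa : x.1 = a := eq_of_mem_tangentBall_bdry hn ha.1 hx h0
    refine ⟨r, hr, ?_⟩
    rw [hxa]

lemma niemBas_isBasis (hn : 0 < n) (A D : Set (EuclideanSpace ℝ (Fin n))) (hD : Dense D) :
    @IsTopologicalBasis (HalfSpace n) (tau n A) (niemBas n A D) := by
  letI := tau n A
  refine ⟨?_, ?_, ?_⟩
  · intro t1 ht1 t2 ht2 x hx
    by_cases hside : 0 < lastCoord n x.1 ∨ x.1 ∈ A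
    · obtain ⟨ρ1, hρ1, h1⟩ := exists_ball_subset_of_mem_niemBas hn ht1 hx.1 hside
      obtain ⟨ρ2, hρ2, h2⟩ := exists_ball_subset_of_mem_niemBas hn ht2 hx.2 hside
      obtain ⟨t, ht, hxt, hsub⟩ := exists_niemBas_ball A hD x (lt_min hρ1 hρ2)
      refine ⟨t, ht, hxt, subset_inter ?_ ?_⟩
      · exact (hsub.trans (preimage_mono (ball_subset_ball (min_le_left _ _)))).trans h1
      · exact (hsub.trans (preimage_mono (ball_subset_ball (min_le_right _ _)))).trans h2
    · push_neg at hside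
      have h0 : lastCoord n x.1 = 0 := le_antisymm hside.1
        (show (0:ℝ) ≤ lastCoord n x.1 from x.2)
      obtain ⟨ρ1, hρ1, h1⟩ := exists_tangent_subset_of_mem_niemBas hn ht1 hx.1 h0 hside.2
      obtain ⟨ρ2, hρ2, h2⟩ := exists_tangent_subset_of_mem_niemBas hn ht2 hx.2 h0 hside.2
      obtain ⟨t, ht, hxt, hsub⟩ := exists_niemBas_tangent hn ⟨h0, hside.2⟩ (lt_min hρ1 hρ2)
      refine ⟨t, ht, hxt, subset_inter ?_ ?_⟩
      · exact (hsub.trans (preimage_mono (tangentBall_mono hn (lt_min hρ1 hρ2)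
          (min_le_left _ _)))).trans h1
      · exact (hsub.trans (preimage_mono (tangentBall_mono hn (lt_min hρ1 hρ2)
          (min_le_right _ _)))).trans h2
  · rw [sUnion_eq_univ_iff]
    intro x
    obtain ⟨t, ht, hxt, _⟩ := exists_niemBas_ball A hD x one_pos
    exact ⟨t, ht, hxt⟩
  · apply le_antisymm
    · exact le_generateFrom_iff_subset_isOpen.2 (niemBas_isOpen hn A)
    · apply le_generateFrom_iff_subset_isOpen.2
      rintro G ((⟨a, ha, ε, hε1, hε2, rfl⟩ | ⟨a, haA, ε, hε, rfl⟩) | ⟨a, ha, ε, hε, rfl⟩)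
      · apply isOpen_gen
        intro x hx
        have hd : dist x.1 a < ε := hx
        obtain ⟨t, ht, hxt, hsub⟩ := exists_niemBas_ball A hD x (show (0:ℝ) < ε - dist x.1 a by linarith)
        exact ⟨t, ht, hxt, hsub.trans (preimage_mono (ball_subset_ball' (by linarith)))⟩
      · apply isOpen_gen
        intro x hx
        have hd : dist x.1 a < ε := hx
        obtain ⟨t, ht, hxt, hsub⟩ := exists_niemBas_ball A hD x (show (0:ℝ) < ε - dist x.1 a by linarith)
        exact ⟨t, ht, hxt, hsub.trans (preimage_mono (ball_subset_ball' (by linarith)))⟩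
      · apply isOpen_gen
        intro x hx
        rcases hx with h | h
        · have hxa : x.1 = a := h
          have hxB : x.1 ∈ Bdry n \ A := by rw [hxa]; exact ha
          obtain ⟨t, ht, hxt, hsub⟩ := exists_niemBas_tangent hn (D := D) hxB hε
          refine ⟨t, ht, hxt, hsub.trans ?_⟩
          rw [hxa]
        · have hd : dist x.1 (a + ε • eVec n) < ε := h
          obtain ⟨t, ht, hxt, hsub⟩ := exists_niemBas_ball A hD x
            (show (0:ℝ) < ε - dist x.1 (a + ε • eVec n) by linarith)
          exact ⟨t, ht, hxt, hsub.trans (preimage_mono ((ball_subset_ball'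
            (by linarith)).trans subset_union_right))⟩

end

noncomputable section
variable {n : ℕ}

lemma dist_add_smul_zero (hn : 0 < n) (a : EuclideanSpace ℝ (Fin n)) (δ : ℝ) :
    dist (a + δ • eVec n) a = |δ| := by
  simpa using dist_add_smul hn a δ 0

lemma niemBas_countable {A D : Set (EuclideanSpace ℝ (Fin n))} (hD : D.Countable)
    (hBA : (Bdry n \ A).Countable) : (niemBas n A D).Countable := by
  apply Set.Countable.union
  · refine Set.Countable.mono ?_ (((hD.prod (countable_univ (α := ℚ))).image
      (fun p : (EuclideanSpace ℝ (Fin n)) × ℚ =>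
        (Subtype.val ⁻¹' ball p.1 (p.2 : ℝ) : Set (HalfSpace n)))))
    rintro s ⟨q, hq, r, hr, rfl⟩
    exact ⟨(q, r), ⟨hq, trivial⟩, rfl⟩
  · refine Set.Countable.mono ?_ (((hBA.prod (countable_univ (α := ℚ))).image
      (fun p : (EuclideanSpace ℝ (Fin n)) × ℚ =>
        (Subtype.val ⁻¹' tangentBall n p.1 (p.2 : ℝ) : Set (HalfSpace n)))))
    rintro s ⟨a, ha, r, hr, rfl⟩
    exact ⟨(a, r), ⟨ha, trivial⟩, rfl⟩

lemma continuous_val_tau (hn : 0 < n) (A : Set (EuclideanSpace ℝ (Fin n))) :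
    Continuous[tau n A, _] (Subtype.val : HalfSpace n → EuclideanSpace ℝ (Fin n)) := by
  letI := tau n A
  exact continuous_def.2 fun U hU => isOpen_euclid hn A hU

lemma isClosed_euclid (hn : 0 < n) (A : Set (EuclideanSpace ℝ (Fin n)))
    {C : Set (EuclideanSpace ℝ (Fin n))} (hC : IsClosed C) :
    IsClosed[tau n A] (Subtype.val ⁻¹' C : Set (HalfSpace n)) := by
  letI := tau n A
  exact hC.preimage (continuous_val_tau hn A)

lemma regular_tau (hn : 0 < n) (A : Set (EuclideanSpace ℝ (Fin n))) :
    @RegularSpace (HalfSpace n) (tau n A) := by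
  letI := tau n A
  have hB := niemBas_isBasis hn A univ dense_univ
  apply RegularSpace.of_exists_mem_nhds_isClosed_subset
  intro x s hs
  obtain ⟨o, ho, hxo, hos⟩ := hB.mem_nhds_iff.1 hs
  rcases ho with ⟨q, -, r, hr, rfl⟩ | ⟨a, ha, r, hr, rfl⟩
  · have hd : dist x.1 q < r := hxo
    have hgap0 : (0:ℝ) < (r:ℝ) - dist x.1 q := by linarith
    set gap : ℝ := (r:ℝ) - dist x.1 q with hgap
    rcases lt_or_eq_of_le (show (0:ℝ) ≤ lastCoord n x.1 from x.2) with h0 | h0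
    · set δ : ℝ := min (lastCoord n x.1) gap / 2 with hδ
      have hδ0 : 0 < δ := by
        have := lt_min h0 hgap0
        rw [hδ]; linarith
      refine ⟨Subtype.val ⁻¹' closedBall x.1 δ, ?_, isClosed_euclid hn A Metric.isClosed_closedBall,
        ?_⟩
      · refine Filter.mem_of_superset ((isOpen_generateFrom_of_mem (Or.inl (Or.inl
          ⟨x.1, h0, δ, hδ0, ?_, rfl⟩))).mem_nhds (mem_ball_self hδ0))
          (preimage_mono ball_subset_closedBall)
        have := min_le_left (lastCoord n x.1) gap
        rw [hδ]; linarith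
      · refine (preimage_mono ?_).trans hos
        intro y hy
        rw [mem_ball]
        have h1 : dist y x.1 ≤ δ := mem_closedBall.1 hy
        have h2 := dist_triangle y x.1 q
        have h3 : δ ≤ gap / 2 := by
          have := min_le_right (lastCoord n x.1) gap
          rw [hδ]; linarith
        linarith
    · by_cases hxA : x.1 ∈ A
      · refine ⟨Subtype.val ⁻¹' closedBall x.1 (gap/2), ?_,
          isClosed_euclid hn A Metric.isClosed_closedBall, ?_⟩
        · exact Filter.mem_of_superset ((isOpen_generateFrom_of_mem (Or.inl (Or.inr
            ⟨x.1, hxA, gap/2, by linarith, rfl⟩))).mem_nhds (mem_ball_self (by linarith)))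
            (preimage_mono ball_subset_closedBall)
        · refine (preimage_mono ?_).trans hos
          intro y hy
          rw [mem_ball]
          have h1 : dist y x.1 ≤ gap/2 := mem_closedBall.1 hy
          have h2 := dist_triangle y x.1 q
          linarith
      · have hxB : x.1 ∈ Bdry n \ A := ⟨h0.symm, hxA⟩
        refine ⟨Subtype.val ⁻¹' ({x.1} ∪ closedBall (x.1 + (gap/4) • eVec n) (gap/4)), ?_,
          isClosed_euclid hn A (isClosed_singleton.union Metric.isClosed_closedBall), ?_⟩
        · exact Filter.mem_of_superset ((isOpen_generateFrom_of_mem (Or.inr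
            ⟨x.1, hxB, gap/4, by linarith, rfl⟩)).mem_nhds (Or.inl rfl))
            (preimage_mono (union_subset_union Subset.rfl ball_subset_closedBall))
        · refine (preimage_mono ?_).trans hos
          rintro y (h | hy)
          · rw [mem_singleton_iff] at h
            rw [h]; exact mem_ball.2 hd
          · rw [mem_ball]
            have h1 : dist y (x.1 + (gap/4) • eVec n) ≤ gap/4 := mem_closedBall.1 hy
            have h2 := dist_triangle y (x.1 + (gap/4) • eVec n) x.1
            have h3 := dist_triangle y x.1 q
            have h4 : dist (x.1 + (gap/4) • eVec n) x.1 = |gap/4| := dist_add_smul_zero hn _ _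
            rw [abs_of_pos (by linarith)] at h4
            linarith
  · rcases hxo with h | h
    · have hxa : x.1 = a := h
      refine ⟨Subtype.val ⁻¹' ({a} ∪ closedBall (a + ((r:ℝ)/2) • eVec n) ((r:ℝ)/2)), ?_,
        isClosed_euclid hn A (isClosed_singleton.union Metric.isClosed_closedBall), ?_⟩
      · exact Filter.mem_of_superset ((isOpen_generateFrom_of_mem (Or.inr
          ⟨a, ha, (r:ℝ)/2, by linarith, rfl⟩)).mem_nhds (Or.inl hxa))
          (preimage_mono (union_subset_union Subset.rfl ball_subset_closedBall))
      · refine (preimage_mono ?_).trans hos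
        rintro y (h' | hy)
        · exact Or.inl h'
        · by_cases hya : y = a
          · exact Or.inl hya
          · exact Or.inr (mem_ball_of_mem_closedBall_tangent hn (by linarith)
              (by linarith : (r:ℝ)/2 < (r:ℝ)) hy hya)
    · have hd : dist x.1 (a + (r:ℝ) • eVec n) < r := h
      have hP : 0 < lastCoord n x.1 := tangent_open_subset_openHalf hn ha.1 h
      have hgap0 : (0:ℝ) < (r:ℝ) - dist x.1 (a + (r:ℝ) • eVec n) := by linarith
      set gap : ℝ := (r:ℝ) - dist x.1 (a + (r:ℝ) • eVec n) with hgap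
      set δ : ℝ := min (lastCoord n x.1) gap / 2 with hδ
      have hδ0 : 0 < δ := by
        have := lt_min hP hgap0
        rw [hδ]; linarith
      refine ⟨Subtype.val ⁻¹' closedBall x.1 δ, ?_, isClosed_euclid hn A Metric.isClosed_closedBall,
        ?_⟩
      · refine Filter.mem_of_superset ((isOpen_generateFrom_of_mem (Or.inl (Or.inl
          ⟨x.1, hP, δ, hδ0, ?_, rfl⟩))).mem_nhds (mem_ball_self hδ0))
          (preimage_mono ball_subset_closedBall)
        have := min_le_left (lastCoord n x.1) gap
        rw [hδ]; linarith
      · refine (preimage_mono ?_).trans hos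
        intro y hy
        refine Or.inr ?_
        rw [mem_ball]
        have h1 : dist y x.1 ≤ δ := mem_closedBall.1 hy
        have h2 := dist_triangle y x.1 (a + (r:ℝ) • eVec n)
        have h3 : δ ≤ gap / 2 := by
          have := min_le_right (lastCoord n x.1) gap
          rw [hδ]; linarith
        linarith

end

noncomputable section
variable {n : ℕ}
open scoped RealInnerProductSpace

lemma imp_1_2 (hn : 0 < n) (A : Set (EuclideanSpace ℝ (Fin n)))
    (h : @HereditarilyLindelofSpace (HalfSpace n) (tau n A)) : (Bdry n \ A).Countable := by
  letI := tau n A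
  haveI := h
  have hS : IsLindelof (Subtype.val ⁻¹' (Bdry n \ A) : Set (HalfSpace n)) :=
    HereditarilyLindelof_LindelofSets _
  set U : ↥(Bdry n \ A) → Set (HalfSpace n) :=
    fun a => Subtype.val ⁻¹' tangentBall n a.1 1 with hU
  have hUo : ∀ a, IsOpen (U a) := fun a =>
    isOpen_generateFrom_of_mem (Or.inr ⟨a.1, a.2, 1, one_pos, rfl⟩)
  have hcov : (Subtype.val ⁻¹' (Bdry n \ A) : Set (HalfSpace n)) ⊆ ⋃ a, U a := by
    intro x hx
    exact mem_iUnion.2 ⟨⟨x.1, hx⟩, Or.inl rfl⟩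
  obtain ⟨t, htc, hcov2⟩ := hS.elim_countable_subcover U hUo hcov
  have hsub : Bdry n \ A ⊆ (fun a : ↥(Bdry n \ A) => a.1) '' t := by
    intro b hb
    have hb0 : lastCoord n b = 0 := hb.1
    have hbX : b ∈ HalfSpace n := le_of_eq hb0.symm
    have hmem := hcov2 (show (⟨b, hbX⟩ : HalfSpace n) ∈ _ from hb)
    obtain ⟨a, hat, hba⟩ := mem_iUnion₂.1 hmem
    have ha0 : lastCoord n a.1 = 0 := a.2.1
    exact ⟨a, hat, (eq_of_mem_tangentBall_bdry hn ha0 hba hb0).symm⟩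
  exact Set.Countable.mono hsub (htc.image _)

lemma imp_2_3 (hn : 0 < n) (A : Set (EuclideanSpace ℝ (Fin n)))
    (h : (Bdry n \ A).Countable) : @SecondCountableTopology (HalfSpace n) (tau n A) := by
  letI := tau n A
  obtain ⟨D, hDc, hDd⟩ := exists_countable_dense (EuclideanSpace ℝ (Fin n))
  exact (niemBas_isBasis hn A D hDd).secondCountableTopology (niemBas_countable hDc h)

lemma imp_3_4 (hn : 0 < n) (A : Set (EuclideanSpace ℝ (Fin n)))
    (h : @SecondCountableTopology (HalfSpace n) (tau n A)) :
    @MetrizableSpace (HalfSpace n) (tau n A) := by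
  letI := tau n A
  haveI := h
  haveI : T0Space (HalfSpace n) :=
    t0Space_of_injective_of_continuous Subtype.val_injective (continuous_val_tau hn A)
  haveI := regular_tau hn A
  infer_instance

lemma secondCountable_of_metrizable_separable (X : Type*) [TopologicalSpace X]
    [MetrizableSpace X] [SeparableSpace X] : SecondCountableTopology X := by
  letI : MetricSpace X := TopologicalSpace.metrizableSpaceMetric X
  exact UniformSpace.secondCountable_of_separable X

lemma imp_4_3 (hn : 0 < n) (A : Set (EuclideanSpace ℝ (Fin n)))
    (h : @MetrizableSpace (HalfSpace n) (tau n A)) :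
    @SecondCountableTopology (HalfSpace n) (tau n A) := by
  letI := tau n A
  haveI := h
  obtain ⟨D, hDc, hDd⟩ := exists_countable_dense (EuclideanSpace ℝ (Fin n))
  have hB := niemBas_isBasis hn A univ dense_univ
  have hlc : Continuous (lastCoord n) := by
    have heq : lastCoord n = fun x => ⟪eVec n, x⟫ := funext (lastCoord_inner hn)
    rw [heq]
    exact Continuous.inner continuous_const continuous_id
  have hOH : IsOpen (OpenHalf n) := by
    have heq : OpenHalf n = lastCoord n ⁻¹' Ioi 0 := rfl
    rw [heq]; exact isOpen_Ioi.preimage hlc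
  set Dd : Set (HalfSpace n) := Subtype.val ⁻¹' (D ∩ OpenHalf n) with hDdef
  have hDdc : Dd.Countable :=
    (Set.Countable.mono inter_subset_left hDc).preimage Subtype.val_injective
  have hDdd : Dense Dd := by
    rw [hB.dense_iff]
    rintro o (⟨q, -, r, hr, rfl⟩ | ⟨a, ha, r, hr, rfl⟩) hone
    · obtain ⟨x, hx⟩ := hone
      have hxq : dist x.1 q < r := hx
      set tt : ℝ := ((r:ℝ) - dist x.1 q)/2 with htt
      have htt0 : 0 < tt := by rw [htt]; linarith
      have hz1 : x.1 + tt • eVec n ∈ ball q r := by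
        rw [mem_ball]
        have h2 := dist_triangle (x.1 + tt • eVec n) x.1 q
        have h4 : dist (x.1 + tt • eVec n) x.1 = |tt| := dist_add_smul_zero hn _ _
        rw [abs_of_pos htt0] at h4
        rw [htt] at h4 ⊢
        linarith [h4 ▸ h2]
      have hz2 : x.1 + tt • eVec n ∈ OpenHalf n := by
        have : lastCoord n (x.1 + tt • eVec n) = lastCoord n x.1 + tt :=
          lastCoord_add_smul hn _ _
        have hx2 : (0:ℝ) ≤ lastCoord n x.1 := x.2
        simp only [OpenHalf, mem_setOf_eq, this]
        linarith
      obtain ⟨y, hyD, hy⟩ := hDd.exists_mem_open (isOpen_ball.inter hOH)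
        ⟨x.1 + tt • eVec n, hz1, hz2⟩
      have hyX : (0:ℝ) ≤ lastCoord n y := le_of_lt hy.2
      exact ⟨⟨y, hyX⟩, hy.1, hyD, hy.2⟩
    · obtain ⟨y, hyD, hy⟩ := hDd.exists_mem_open (isOpen_ball (x := a + (r:ℝ) • eVec n) (ε := (r:ℝ)))
        ⟨a + (r:ℝ) • eVec n, mem_ball_self hr⟩
      have hyP : y ∈ OpenHalf n := tangent_open_subset_openHalf hn ha.1 hy
      have hyX : (0:ℝ) ≤ lastCoord n y := le_of_lt hyP
      exact ⟨⟨y, hyX⟩, Or.inr hy, hyD, hyP⟩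
  haveI : SeparableSpace (HalfSpace n) := ⟨⟨Dd, hDdc, hDdd⟩⟩
  exact secondCountable_of_metrizable_separable _

end


/-- For every `n ≥ 2` and `A ⊆ L`, the following are equivalent:
(i) `(X, τ(A))` is hereditarily Lindelöf; (ii) `L \ A` is countable;
(iii) `(X, τ(A))` is second countable; (iv) `(X, τ(A))` is metrizable. -/
theorem tauA_hereditarilyLindelof_tfae (n : ℕ) (hn : 2 ≤ n)
    (A : Set (EuclideanSpace ℝ (Fin n))) (hA : A ⊆ Bdry n) :
    [@HereditarilyLindelofSpace (HalfSpace n) (tau n A),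
     (Bdry n \ A).Countable,
     @SecondCountableTopology (HalfSpace n) (tau n A),
     @MetrizableSpace (HalfSpace n) (tau n A)].TFAE := by
  have hn0 : 0 < n := by omega
  tfae_have 1 → 2 := imp_1_2 hn0 A
  tfae_have 2 → 3 := imp_2_3 hn0 A
  tfae_have 3 → 4 := imp_3_4 hn0 A
  tfae_have 4 → 3 := imp_4_3 hn0 A
  tfae_have 3 → 1 := fun h => @SecondCountableTopology.toHereditarilyLindelof _ (tau n A) h
  tfae_finish
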